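/- arXiv:2211.08135 — 3 statements merged into one kernel-verified Lean document; each statement's English description precedes it below -/
import Mathlib

section
/- With à the cover of an Artin algebra A as in the construction, every simple right Ã-module embeds into the regular module Ã; consequently the delooping level of à is 0. -/
open CategoryTheory MulOpposite

universe u

/-- `f : P →ₗ[R] X` is a projective cover: `P` is projective, `f` is surjective, and the
kernel of `f` is superfluous in `P`. -/
def IsProjCover (R : Type u) [Ring R] {P X : Type u} [AddCommGroup P] [Module R P]
    [AddCommGroup X] [Module R X] (f : P →ₗ[R] X) : Prop :=
  Module.Projective R P ∧ Function.Surjective f ∧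
    ∀ N : Submodule R P, N ⊔ LinearMap.ker f = ⊤ → N = ⊤

/-- `IsSyzygy R n X K` means that `K` is an `n`-th syzygy `Ω^n(X)` of `X`, obtained by
iteratively taking kernels of projective covers. -/
inductive IsSyzygy (R : Type u) [Ring R] : ℕ → ModuleCat.{u} R → ModuleCat.{u} R → Prop
  | zero (X : ModuleCat.{u} R) : IsSyzygy R 0 X X
  | succ {n : ℕ} {X K P : ModuleCat.{u} R} (f : P ⟶ X) (hf : IsProjCover R f.hom)
      (h : IsSyzygy R n (ModuleCat.of R (LinearMap.ker f.hom)) K) : IsSyzygy R (n + 1) X K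

/-- `X` is a direct summand of `Y`. -/
def IsDirectSummandOf (R : Type u) [Ring R] (X Y : Type u) [AddCommGroup X] [Module R X]
    [AddCommGroup Y] [Module R Y] : Prop :=
  ∃ (i : X →ₗ[R] Y) (r : Y →ₗ[R] X), r ∘ₗ i = LinearMap.id

/-- The delooping level of a module `X`: the least `d` such that `Ω^d(X)` is a direct
summand of `P ⊕ Ω^{d+1}(M)` for some finitely generated projective module `P` and some
finitely generated module `M`; it is `⊤` (i.e. `∞`) if no such `d` exists. -/
noncomputable def delLevel (R : Type u) [Ring R] (X : ModuleCat.{u} R) : ℕ∞ :=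
  sInf {e : ℕ∞ | ∃ d : ℕ, e = (d : ℕ∞) ∧
    ∃ M P S T : ModuleCat.{u} R, Module.Finite R M ∧ Module.Projective R P ∧
      Module.Finite R P ∧ IsSyzygy R d X S ∧ IsSyzygy R (d + 1) M T ∧
      IsDirectSummandOf R S (P × T)}

/-- The delooping level of a ring `R`, computed with left `R`-modules: the supremum
(= maximum, for an Artin algebra) of the delooping levels of the simple modules. -/
noncomputable def delAlg (R : Type u) [Ring R] : ℕ∞ :=
  ⨆ (S : ModuleCat.{u} R) (_ : IsSimpleModule R S), delLevel R S

/-- The delooping level of a ring `R` computed with right `R`-modules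
(= left `Rᵐᵒᵖ`-modules), as in the paper. -/
noncomputable def delAlgRight (R : Type u) [Ring R] : ℕ∞ := delAlg Rᵐᵒᵖ

/-- A ring is an Artin algebra if it is a module-finite algebra over some commutative
artinian ring. -/
def IsArtinAlgebra (A : Type u) [Ring A] : Prop :=
  ∃ (k : Type u) (_ : CommRing k) (_ : IsArtinianRing k) (_ : Algebra k A),
    Module.Finite k A

/-- The radical of a module: the intersection of its maximal submodules. -/
def modRad (R : Type u) [Ring R] (N : Type u) [AddCommGroup N] [Module R N] :
    Submodule R N := sInf {P : Submodule R N | IsCoatom P}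

/-- `Z` belongs to `add N`: `Z` is a direct summand of a finite direct sum of copies
of `N`. -/
def InAdd (R : Type u) [Ring R] (N Z : Type u) [AddCommGroup N] [Module R N]
    [AddCommGroup Z] [Module R Z] : Prop :=
  ∃ n : ℕ, IsDirectSummandOf R Z (Fin n → N)

section Constructions

/-- The Jacobson radical of `A` as a two-sided ideal. -/
noncomputable def radT (A : Type u) [Ring A] : TwoSidedIdeal A :=
  (⊥ : TwoSidedIdeal A).jacobson

/-- The semisimple quotient `A/rad(A)`. -/
def Sq (A : Type u) [Ring A] : Type u := (radT A).ringCon.Quotient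

noncomputable instance (A : Type u) [Ring A] : Ring (Sq A) :=
  inferInstanceAs (Ring (radT A).ringCon.Quotient)

/-- The natural projection `A → A/rad(A)`. -/
noncomputable def sqMk (A : Type u) [Ring A] : A →+* Sq A := RingCon.mk' _

/-- `B = T(A/rad(A))`, the trivial extension of the semisimple quotient of `A`. -/
def BB (A : Type u) [Ring A] : Type u := TrivSqZeroExt (Sq A) (Sq A)

noncomputable instance (A : Type u) [Ring A] : Ring (BB A) :=
  inferInstanceAs (Ring (TrivSqZeroExt (Sq A) (Sq A)))

/-- The projection `B = T(A/rad(A)) → A/rad(A)`, a ring homomorphism. -/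
noncomputable def bbFst (A : Type u) [Ring A] : BB A →+* Sq A where
  toFun := TrivSqZeroExt.fst
  map_one' := TrivSqZeroExt.fst_one (R := Sq A) (M := Sq A)
  map_mul' x y := TrivSqZeroExt.fst_mul x y
  map_zero' := TrivSqZeroExt.fst_zero (R := Sq A) (M := Sq A)
  map_add' x y := TrivSqZeroExt.fst_add x y

/-! ### The `A`-`B`-bimodule `M = A/rad(A)` and the upper triangular algebra
`Λ = (A, A/rad(A); 0, B)` -/

/-- `M = A/rad(A)` viewed as an `A`-`B`-bimodule (left action of `A` via `A → A/rad(A)`,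
right action of `B` via `B → A/rad(A)`). -/
def MM (A : Type u) [Ring A] : Type u := Sq A

noncomputable instance (A : Type u) [Ring A] : AddCommGroup (MM A) :=
  inferInstanceAs (AddCommGroup (Sq A))

/-- Left action of `A × B` on `M` through the `A`-component. -/
noncomputable instance (A : Type u) [Ring A] : Module (A × BB A) (MM A) :=
  Module.compHom (Sq A) ((sqMk A).comp (RingHom.fst A (BB A)))

/-- Right action of `A × B` on `M` through the `B`-component. -/
noncomputable instance (A : Type u) [Ring A] : Module (A × BB A)ᵐᵒᵖ (MM A) :=
  Module.compHom (Sq A) (RingHom.op ((bbFst A).comp (RingHom.snd A (BB A))))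

noncomputable instance (A : Type u) [Ring A] :
    SMulCommClass (A × BB A) (A × BB A)ᵐᵒᵖ (MM A) :=
  ⟨fun c c' m => by
    show sqMk A c.1 * ((show Sq A from m) * bbFst A (unop c').2) =
      (sqMk A c.1 * (show Sq A from m)) * bbFst A (unop c').2
    exact (mul_assoc _ _ _).symm⟩

/-- The upper triangular matrix algebra `Λ = (A, A/rad(A); 0, B)`, realized as the
trivial square-zero extension of `A × B` by the bimodule `M = A/rad(A)`. -/
def Lam (A : Type u) [Ring A] : Type u := TrivSqZeroExt (A × BB A) (MM A)

noncomputable instance (A : Type u) [Ring A] : Ring (Lam A) :=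
  inferInstanceAs (Ring (TrivSqZeroExt (A × BB A) (MM A)))

/-! ### The `B`-`A`-bimodule `M' = A/rad(A)` and the cover
`Ã = (A, 0; A/rad(A), B)` -/

/-- `M' = A/rad(A)` viewed as a `B`-`A`-bimodule. -/
def MC (A : Type u) [Ring A] : Type u := Sq A

noncomputable instance (A : Type u) [Ring A] : AddCommGroup (MC A) :=
  inferInstanceAs (AddCommGroup (Sq A))

/-- Left action of `A × B` on `M'` through the `B`-component. -/
noncomputable instance (A : Type u) [Ring A] : Module (A × BB A) (MC A) :=
  Module.compHom (Sq A) ((bbFst A).comp (RingHom.snd A (BB A)))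

/-- Right action of `A × B` on `M'` through the `A`-component. -/
noncomputable instance (A : Type u) [Ring A] : Module (A × BB A)ᵐᵒᵖ (MC A) :=
  Module.compHom (Sq A) (RingHom.op ((sqMk A).comp (RingHom.fst A (BB A))))

noncomputable instance (A : Type u) [Ring A] :
    SMulCommClass (A × BB A) (A × BB A)ᵐᵒᵖ (MC A) :=
  ⟨fun c c' m => by
    show bbFst A c.2 * ((show Sq A from m) * sqMk A (unop c').1) =
      (bbFst A c.2 * (show Sq A from m)) * sqMk A (unop c').1
    exact (mul_assoc _ _ _).symm⟩

/-- The cover `Ã = (A, 0; A/rad(A), B)` of `A`: the lower triangular matrix algebra,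
realized as the trivial square-zero extension of `A × B` by the `B`-`A`-bimodule
`M' = A/rad(A)`. -/
def Cov (A : Type u) [Ring A] : Type u := TrivSqZeroExt (A × BB A) (MC A)

noncomputable instance (A : Type u) [Ring A] : Ring (Cov A) :=
  inferInstanceAs (Ring (TrivSqZeroExt (A × BB A) (MC A)))

/-- The projection `Λ → A × B`. -/
noncomputable def lamFst (A : Type u) [Ring A] : Lam A →+* A × BB A where
  toFun := TrivSqZeroExt.fst
  map_one' := TrivSqZeroExt.fst_one (R := A × BB A) (M := MM A)
  map_mul' x y := TrivSqZeroExt.fst_mul x y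
  map_zero' := TrivSqZeroExt.fst_zero (R := A × BB A) (M := MM A)
  map_add' x y := TrivSqZeroExt.fst_add x y

end Constructions

/-! The projection `covProj : Ã → A/rad A × A/rad A` onto the diagonal is surjective and `1 - z`
is a unit for every `z ∈ ker covProj`, so `ker covProj` lies in the Jacobson radical and
`Ã / ker covProj` is semisimple (this is where `A` being an Artin algebra is used). A simple right
`Ã`-module is killed by the radical, hence is a quotient, and so a direct summand, of
`Ã / ker covProj`. That module is realized inside `Ã` as the right ideal `c Ã` of
`c = covSocleElt`, which lies in `ker covProj`. So every simple `S` embeds into `Ã` with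
superfluous image, `Ã → Ã/S` is a projective cover, and `S = Ω¹(Ã/S)` has delooping level `0`. -/

namespace Ring

variable {R : Type*} [Ring R]

theorem isUnit_one_sub_of_mem_jacobson {x : R} (hx : x ∈ jacobson R) : IsUnit (1 - x) := by
  have left_inv : ∀ y ∈ jacobson R, ∃ z, z * (1 - y) = 1 := fun y hy => by
    obtain ⟨z, hz⟩ := Ideal.mem_jacobson_iff.mp (Ideal.jacobson_bot (R := R) ▸ hy) (-1)
    rw [Submodule.mem_bot, sub_eq_zero] at hz
    exact ⟨z, (by noncomm_ring : z * (1 - y) = z * -1 * y + z).trans hz⟩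
  obtain ⟨z, hz⟩ := left_inv x hx
  -- `z = 1 - (-(z * x))` has a left inverse too, which must then be `1 - x`.
  obtain ⟨w, hw⟩ := left_inv (-(z * x)) (neg_mem (Ideal.mul_mem_left _ z hx))
  have hz' : 1 - -(z * x) = z := by
    calc 1 - -(z * x) = z * (1 - x) + z * x := by rw [hz]; noncomm_ring
      _ = z := by noncomm_ring
  rw [hz'] at hw
  have hw' : w = 1 - x := by
    calc w = w * (z * (1 - x)) := by rw [hz, mul_one]
      _ = 1 - x := by rw [← mul_assoc, hw, one_mul]
  exact ⟨⟨1 - x, z, hw' ▸ hw, hz⟩, rfl⟩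

theorem le_jacobson_of_forall_isUnit_one_sub {I : Ideal R} (h : ∀ x ∈ I, IsUnit (1 - x)) :
    I ≤ jacobson R := by
  intro x hx
  rw [← Ideal.jacobson_bot, Ideal.mem_jacobson_iff]
  intro y
  obtain ⟨u, hu⟩ := h (-(y * x)) (neg_mem (I.mul_mem_left y hx))
  refine ⟨↑u⁻¹, ?_⟩
  rw [Submodule.mem_bot, sub_eq_zero]
  calc ↑u⁻¹ * y * x + ↑u⁻¹ = ↑u⁻¹ * (1 - -(y * x)) := by noncomm_ring
    _ = 1 := by rw [← hu, Units.inv_mul]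

end Ring

theorem Submodule.eq_top_of_sup_eq_top_of_forall_isUnit_one_sub {R : Type*} [Ring R]
    {N I : Submodule Rᵐᵒᵖ R} (hI : ∀ x ∈ I, IsUnit (1 - x)) (h : N ⊔ I = ⊤) : N = ⊤ := by
  obtain ⟨n, hn, x, hx, hnx⟩ := mem_sup.mp (h ▸ mem_top : (1 : R) ∈ N ⊔ I)
  obtain ⟨u, hu⟩ := hI x hx
  rw [← eq_sub_of_add_eq hnx] at hu
  rw [eq_top_iff']
  intro y
  have : y = op (↑u⁻¹ * y) • n := by
    rw [op_smul_eq_mul, ← hu, ← mul_assoc, Units.mul_inv, one_mul]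
  exact this ▸ N.smul_mem _ hn

theorem IsSimpleModule.exists_injective_quotient_of_le_jacobson {R M : Type*} [Ring R]
    [AddCommGroup M] [Module R M] [IsSimpleModule R M] (I : Ideal R) [I.IsTwoSided]
    [IsSemisimpleRing (R ⧸ I)] (hI : I ≤ Ring.jacobson R) :
    ∃ f : M →ₗ[R] R ⧸ I, Function.Injective f := by
  have : IsSemisimpleModule R (R ⧸ I) :=
    (LinearMap.isSemisimpleModule_iff_of_bijective (σ := Ideal.Quotient.mk I)
      { AddMonoidHom.id (R ⧸ I) with map_smul' := fun _ _ => rfl } Function.bijective_id).mpr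
      inferInstance
  have := IsSimpleModule.nontrivial R M
  obtain ⟨m, hm⟩ := exists_ne (0 : M)
  have hIm : I ≤ LinearMap.ker (LinearMap.toSpanSingleton R M m) := fun r hr =>
    Module.mem_annihilator.mp (IsSemisimpleModule.jacobson_le_annihilator R M (hI hr)) m
  have hg : Function.Surjective (I.liftQ _ hIm) := by
    rw [← LinearMap.range_eq_top, Submodule.range_liftQ, LinearMap.range_eq_top]
    exact IsSimpleModule.toSpanSingleton_surjective R hm
  obtain ⟨f, hf⟩ := IsSemisimpleModule.lifting_property _ hg LinearMap.id
  exact ⟨f, Function.LeftInverse.injective (g := I.liftQ _ hIm) (LinearMap.congr_fun hf)⟩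

def MulOpposite.opLinearEquivSelf (R : Type*) [Ring R] : R ≃ₗ[Rᵐᵒᵖ] Rᵐᵒᵖ :=
  { opAddEquiv with map_smul' := fun _ _ => rfl }

instance (R : Type*) [Ring R] : Module.Projective Rᵐᵒᵖ R :=
  .of_equiv (MulOpposite.opLinearEquivSelf R).symm

instance (R : Type*) [Ring R] : Module.Finite Rᵐᵒᵖ R :=
  .equiv (MulOpposite.opLinearEquivSelf R).symm

theorem isProjCover_mkQ {R P : Type u} [Ring R] [AddCommGroup P] [Module R P]
    [Module.Projective R P] {K : Submodule R P} (hK : ∀ N : Submodule R P, N ⊔ K = ⊤ → N = ⊤) :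
    IsProjCover R K.mkQ :=
  ⟨inferInstance, K.mkQ_surjective, by rwa [K.ker_mkQ]⟩

theorem delLevel_eq_zero_of_injective {R P : Type u} [Ring R] [AddCommGroup P] [Module R P]
    [Module.Projective R P] [Module.Finite R P] (S : ModuleCat.{u} R) (f : S →ₗ[R] P)
    (hf : Function.Injective f) (hsup : ∀ N : Submodule R P, N ⊔ LinearMap.range f = ⊤ → N = ⊤) :
    delLevel R S = 0 := by
  set K := LinearMap.range f
  -- `S ≅ K = Ω¹(P/K)`, because `P → P/K` is a projective cover.
  let e : S ≃ₗ[R] LinearMap.ker K.mkQ :=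
    (LinearEquiv.ofInjective f hf).trans (LinearEquiv.ofEq _ _ K.ker_mkQ.symm)
  refine le_antisymm (sInf_le ⟨0, Nat.cast_zero.symm, ModuleCat.of R (P ⧸ K), ModuleCat.of R P, S,
    ModuleCat.of R (LinearMap.ker K.mkQ), inferInstance, inferInstance, inferInstance,
    .zero S, .succ (ModuleCat.ofHom K.mkQ) (isProjCover_mkQ hsup) (.zero _),
    LinearMap.inr R _ _ ∘ₗ e.toLinearMap, e.symm.toLinearMap ∘ₗ LinearMap.snd R _ _, ?_⟩) bot_le
  ext s
  simp

section Cover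

variable (A : Type u) [Ring A]

theorem sqMk_surjective : Function.Surjective (sqMk A) := RingCon.mk'_surjective _

variable {A} in
theorem sqMk_eq_zero_iff {a : A} : sqMk A a = 0 ↔ a ∈ Ring.jacobson A := by
  change (a : (radT A).ringCon.Quotient) = ((0 : A) : (radT A).ringCon.Quotient) ↔ _
  rw [RingCon.eq, ← TwoSidedIdeal.mem_iff, ← TwoSidedIdeal.mem_asIdeal, radT,
    TwoSidedIdeal.asIdeal_jacobson, ← Ideal.jacobson_bot,
    show TwoSidedIdeal.asIdeal (⊥ : TwoSidedIdeal A) = ⊥ by ext; simp]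

theorem isSemisimpleRing_sq (k : Type u) [CommRing k] [IsArtinianRing k] [Algebra k A]
    [Module.Finite k A] : IsSemisimpleRing (Sq A) :=
  have : IsArtinianRing A := .of_finite k A
  (Ideal.Quotient.lift _ _ fun _ => sqMk_eq_zero_iff.mpr).isSemisimpleRing_of_surjective
    (Ideal.Quotient.lift_surjective_of_surjective _ _ (sqMk_surjective A))

noncomputable def covProj : Cov A →+* Sq A × Sq A :=
  (((bbFst A).comp (RingHom.snd A (BB A))).prod ((sqMk A).comp (RingHom.fst A (BB A)))).comp
    (TrivSqZeroExt.fstHom ℕ (A × BB A) (MC A)).toRingHom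

theorem covProj_surjective : Function.Surjective (covProj A) := by
  rintro ⟨u, v⟩
  obtain ⟨a, rfl⟩ := sqMk_surjective A v
  exact ⟨(((a, ((u, 0) : BB A)), 0) : Cov A), rfl⟩

variable {A} in
theorem isUnit_one_sub_of_covProj_eq_zero {z : Cov A} (hz : covProj A z = 0) : IsUnit (1 - z) := by
  obtain ⟨⟨a, b⟩, m⟩ := z
  have ha : a ∈ Ring.jacobson A := sqMk_eq_zero_iff.mp (congrArg Prod.snd hz)
  have hb : b.1 = 0 := congrArg Prod.fst hz
  refine (TrivSqZeroExt.isUnit_iff_isUnit_fst (R := A × BB A) (M := MC A)).mpr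
    (Prod.isUnit_iff.mpr ⟨Ring.isUnit_one_sub_of_mem_jacobson ha, ?_⟩)
  refine (TrivSqZeroExt.isUnit_iff_isUnit_fst (R := Sq A) (M := Sq A)).mpr ?_
  change IsUnit (1 - b.1)
  rw [hb, sub_zero]
  exact isUnit_one

/-- In matrix form `c = (0 0; 1 ε)` with `ε = (0, 1) ∈ T(A/rad A)`; its right annihilator is
`ker covProj`, so `c Ã ≅ Ã / ker covProj`. -/
noncomputable def covSocleElt : Cov A := (((0 : A), ((0 : Sq A), (1 : Sq A))), (1 : Sq A))

theorem covProj_covSocleElt : covProj A (covSocleElt A) = 0 :=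
  Prod.ext rfl (map_zero (sqMk A))

theorem covSocleElt_mul_eq_zero_iff (y : Cov A) : covSocleElt A * y = 0 ↔ covProj A y = 0 := by
  obtain ⟨⟨a, b⟩, m⟩ := y
  change (((0 : A) * a, ((0 : Sq A) * b.1, (0 : Sq A) * b.2 + (1 : Sq A) * b.1)),
    (0 : Sq A) * (show Sq A from m) + (1 : Sq A) * sqMk A a) =
      (((0 : A), ((0 : Sq A), (0 : Sq A))), (0 : Sq A)) ↔ (b.1, sqMk A a) = 0
  rw [zero_mul, zero_mul, zero_mul, zero_mul, one_mul, one_mul, zero_add, zero_add]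
  simp [Prod.ext_iff]

theorem exists_injective_cov (k : Type u) [CommRing k] [IsArtinianRing k] [Algebra k A]
    [Module.Finite k A] (S : Type u) [AddCommGroup S] [Module (Cov A)ᵐᵒᵖ S]
    [IsSimpleModule (Cov A)ᵐᵒᵖ S] :
    ∃ f : S →ₗ[(Cov A)ᵐᵒᵖ] Cov A, Function.Injective f ∧ ∀ s, covProj A (f s) = 0 := by
  have := isSemisimpleRing_sq A k
  set I := RingHom.ker (RingHom.op (covProj A))
  have hsurj : Function.Surjective (RingHom.op (covProj A)) := fun w => by
    obtain ⟨y, hy⟩ := covProj_surjective A w.unop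
    exact ⟨op y, congrArg op hy⟩
  have : IsSemisimpleRing ((Cov A)ᵐᵒᵖ ⧸ I) :=
    (RingHom.quotientKerEquivOfSurjective hsurj).symm.isSemisimpleRing
  have hI : I ≤ Ring.jacobson (Cov A)ᵐᵒᵖ := Ring.le_jacobson_of_forall_isUnit_one_sub fun z hz =>
    (isUnit_one_sub_of_covProj_eq_zero (congrArg unop hz)).op
  obtain ⟨f, hf⟩ := IsSimpleModule.exists_injective_quotient_of_le_jacobson (M := S) I hI
  have hker : I = LinearMap.ker (LinearMap.toSpanSingleton _ _ (covSocleElt A)) := by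
    ext r
    rw [RingHom.mem_ker, LinearMap.mem_ker, LinearMap.toSpanSingleton_apply,
      MulOpposite.smul_eq_mul_unop, covSocleElt_mul_eq_zero_iff]
    exact op_eq_zero_iff _
  refine ⟨I.liftQ _ hker.le ∘ₗ f, ?_, ?_⟩
  · exact (LinearMap.ker_eq_bot.mp (Submodule.ker_liftQ_eq_bot' I _ hker)).comp hf
  · intro s
    obtain ⟨r, hr⟩ := Submodule.mkQ_surjective I (f s)
    rw [LinearMap.comp_apply, ← hr, Submodule.mkQ_apply, Submodule.liftQ_apply,
      LinearMap.toSpanSingleton_apply, MulOpposite.smul_eq_mul_unop, map_mul,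
      covProj_covSocleElt, zero_mul]

end Cover

/-- With `Ã` the cover `(A, 0; A/rad(A), B)` of an Artin algebra `A`
(where `B = T(A/rad(A))`), every simple right `Ã`-module embeds into the regular module
`Ã`; consequently the delooping level of `Ã` is `0`. -/
theorem stmt_4 (k : Type u) [CommRing k] [IsArtinianRing k]
    (A : Type u) [Ring A] [Algebra k A] [Module.Finite k A] :
    (∀ S : ModuleCat.{u} (Cov A)ᵐᵒᵖ, IsSimpleModule (Cov A)ᵐᵒᵖ S →
      ∃ f : S →ₗ[(Cov A)ᵐᵒᵖ] (Cov A), Function.Injective f) ∧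
    delAlgRight (Cov A) = 0 := by
  refine ⟨fun S _ => (exists_injective_cov A k S).imp fun _ => And.left, ?_⟩
  simp only [delAlgRight, delAlg, ENat.iSup_eq_zero]
  intro S _
  obtain ⟨f, hf, hf0⟩ := exists_injective_cov A k S
  refine delLevel_eq_zero_of_injective S f hf fun N hN =>
    Submodule.eq_top_of_sup_eq_top_of_forall_isUnit_one_sub ?_ hN
  rintro _ ⟨s, rfl⟩
  exact isUnit_one_sub_of_covProj_eq_zero (hf0 s)
end

section
/- Let Λ = (A, M; 0, B) be a triangular matrix Artin algebra with M = A/rad(A) as A-B-bimodule and B = T(A/rad(A)). If 0 → (K, L, h) → (U, V, g) → (X, Y, f) → 0 is an exact sequence of right Λ-modules in which (U, V, g) → (X, Y, f) is a projective cover, then the induced sequence 0 → K → U → X → 0 of right A-modules is exact and U → X is a projective cover of X; in particular K ≅ Ω(X) as A-modules. -/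
open CategoryTheory MulOpposite

universe u

section Triples

variable (A : Type u) [Ring A]

/-- The projection `Λ → A`. -/
noncomputable def lamToA : Lam A →+* A := (RingHom.fst A (BB A)).comp (lamFst A)

/-- The projection `Λ → B`. -/
noncomputable def lamToB : Lam A →+* BB A := (RingHom.snd A (BB A)).comp (lamFst A)

/-- A right `A`-module, viewed as the right `Λ`-module `(X, 0, 0)` via `Λ → A`. -/
noncomputable def lamModOfA (X : Type u) [AddCommGroup X] [Module Aᵐᵒᵖ X] :
    Module (Lam A)ᵐᵒᵖ X :=
  Module.compHom X (RingHom.op (lamToA A))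

/-- A right `B`-module, viewed as the right `Λ`-module `(0, Y, 0)` via `Λ → B`. -/
noncomputable def lamModOfB (Y : Type u) [AddCommGroup Y] [Module (BB A)ᵐᵒᵖ Y] :
    Module (Lam A)ᵐᵒᵖ Y :=
  Module.compHom Y (RingHom.op (lamToB A))

/-- The data of a right `Λ`-module triple `(X, Y, f)`: a right `A`-module `X`, a right
`B`-module `Y`, and a biadditive, `A`-balanced, right `B`-linear pairing
`f : X → A/rad(A) → Y`, corresponding to a homomorphism `X ⊗_A M → Y` of right
`B`-modules. -/
structure TripleMap (X Y : Type u) [AddCommGroup X] [Module Aᵐᵒᵖ X]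
    [AddCommGroup Y] [Module (BB A)ᵐᵒᵖ Y] where
  f : X → Sq A → Y
  addl : ∀ x x' m, f (x + x') m = f x m + f x' m
  addr : ∀ x m m', f x (m + m') = f x m + f x m'
  bal : ∀ (x : X) (a : A) (m : Sq A), f (op a • x) m = f x (sqMk A a * m)
  linr : ∀ (x : X) (m : Sq A) (b : BB A), f x (m * bbFst A b) = op b • f x m

namespace TripleMap

variable {A} {X Y : Type u} [AddCommGroup X] [Module Aᵐᵒᵖ X]
  [AddCommGroup Y] [Module (BB A)ᵐᵒᵖ Y] (t : TripleMap A X Y)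

theorem f_zero_left (m : Sq A) : t.f 0 m = 0 := by
  have h := t.addl 0 0 m
  rw [add_zero] at h
  exact (left_eq_add.mp h)

theorem f_zero_right (x : X) : t.f x 0 = 0 := by
  have h := t.addr x 0 0
  rw [add_zero] at h
  exact (left_eq_add.mp h)

/-- The right `Λ`-module structure on `X × Y` determined by the triple `(X, Y, f)`:
`(x, y)·((a, b), m) = (x·a, y·b + f(x ⊗ m))`. -/
noncomputable def module : Module (Lam A)ᵐᵒᵖ (X × Y) :=
  letI : SMul (Lam A)ᵐᵒᵖ (X × Y) :=
    ⟨fun l p => (op (unop l).fst.1 • p.1,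
      op (unop l).fst.2 • p.2 + t.f p.1 ((unop l).snd : Sq A))⟩
  { smul := fun l p => l • p
    one_smul := fun p => by
      apply Prod.ext
      · show op ((1 : Lam A).fst.1) • p.1 = p.1
        erw [TrivSqZeroExt.fst_one]
        show op (1 : A) • p.1 = p.1
        erw [op_one, one_smul]
      · show op ((1 : Lam A).fst.2) • p.2 + t.f p.1 ((1 : Lam A).snd : Sq A) = p.2
        erw [TrivSqZeroExt.fst_one, TrivSqZeroExt.snd_one]
        show op (1 : BB A) • p.2 + t.f p.1 (0 : Sq A) = p.2
        erw [op_one, one_smul, t.f_zero_right, add_zero]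
    mul_smul := fun r s p => by
      apply Prod.ext
      · show op ((unop s * unop r).fst.1) • p.1
            = op ((unop r).fst.1) • (op ((unop s).fst.1) • p.1)
        erw [TrivSqZeroExt.fst_mul]; erw [Prod.fst_mul, op_mul, mul_smul]
      · show op ((unop s * unop r).fst.2) • p.2 + t.f p.1 ((unop s * unop r).snd : Sq A)
            = op ((unop r).fst.2) •
                (op ((unop s).fst.2) • p.2 + t.f p.1 ((unop s).snd : Sq A))
              + t.f (op ((unop s).fst.1) • p.1) ((unop r).snd : Sq A)
        erw [TrivSqZeroExt.fst_mul, TrivSqZeroExt.snd_mul]; erw [Prod.snd_mul, op_mul, mul_smul]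
        erw [t.addr]
        have hbal : t.f p.1 ((unop s).fst • (unop r).snd)
            = t.f (op ((unop s).fst.1) • p.1) ((unop r).snd) :=
          (t.bal p.1 ((unop s).fst.1) ((unop r).snd)).symm
        have hlin : t.f p.1 (op ((unop r).fst) • (unop s).snd)
            = op ((unop r).fst.2) • t.f p.1 ((unop s).snd) :=
          t.linr p.1 ((unop s).snd) ((unop r).fst.2)
        erw [hbal, hlin, smul_add]
        abel
    smul_zero := fun l => by
      apply Prod.ext
      · show op ((unop l).fst.1) • (0 : X) = 0
        erw [smul_zero]
      · show op ((unop l).fst.2) • (0 : Y) + t.f 0 ((unop l).snd : Sq A) = 0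
        erw [smul_zero, t.f_zero_left, add_zero]
    smul_add := fun l p q => by
      apply Prod.ext
      · show op ((unop l).fst.1) • (p.1 + q.1) = _
        erw [smul_add]; rfl
      · show op ((unop l).fst.2) • (p.2 + q.2) + t.f (p.1 + q.1) ((unop l).snd : Sq A)
            = (op ((unop l).fst.2) • p.2 + t.f p.1 ((unop l).snd : Sq A))
              + (op ((unop l).fst.2) • q.2 + t.f q.1 ((unop l).snd : Sq A))
        erw [smul_add, t.addl]
        abel
    add_smul := fun r s p => by
      apply Prod.ext
      · show op ((unop r + unop s).fst.1) • p.1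
            = op ((unop r).fst.1) • p.1 + op ((unop s).fst.1) • p.1
        erw [TrivSqZeroExt.fst_add, Prod.fst_add, MulOpposite.op_add, add_smul]
      · show op ((unop r + unop s).fst.2) • p.2 + t.f p.1 ((unop r + unop s).snd : Sq A)
            = (op ((unop r).fst.2) • p.2 + t.f p.1 ((unop r).snd : Sq A))
              + (op ((unop s).fst.2) • p.2 + t.f p.1 ((unop s).snd : Sq A))
        erw [TrivSqZeroExt.fst_add, TrivSqZeroExt.snd_add, Prod.snd_add, MulOpposite.op_add, add_smul]
        show _ + t.f p.1 (((unop r).snd : Sq A) + ((unop s).snd : Sq A)) = _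
        erw [t.addr]
        abel
    zero_smul := fun p => by
      apply Prod.ext
      · show op ((0 : Lam A).fst.1) • p.1 = 0
        erw [TrivSqZeroExt.fst_zero]
        show op ((0 : A × BB A).1) • p.1 = 0
        erw [Prod.fst_zero, op_zero, zero_smul]
      · show op ((0 : Lam A).fst.2) • p.2 + t.f p.1 ((0 : Lam A).snd : Sq A) = 0
        erw [TrivSqZeroExt.fst_zero, TrivSqZeroExt.snd_zero]
        show op ((0 : A × BB A).2) • p.2 + t.f p.1 ((0 : MM A) : Sq A) = 0
        erw [Prod.snd_zero, op_zero, zero_smul]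
        show (0 : Y) + t.f p.1 (0 : Sq A) = 0
        erw [t.f_zero_right, add_zero] }

end TripleMap

end Triples

/-!
The idempotent `e = diag(1, 0)` of `Λ` acts on a triple `(X, Y, f)` by `(x, y) ↦ (x, 0)`, so
every `Λ`-linear map of triples sends `(X, 0)` into `(X', 0)` and restricts to an `A`-linear map
of the first components; this restriction preserves injectivity, surjectivity and exactness.
Projectivity passes to `X` because `X` is a retract of `X × Y` that is semilinear along `Λ → A`,
with section `x ↦ (x, 0)`. The kernel of the restricted cover stays superfluous because a
supplement `N` of it yields the supplement `N × Y` of the kernel of the `Λ`-cover.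
-/

theorem Module.Projective.of_semilinear_retract {R S : Type*} [Semiring R] [Semiring S]
    {σ : R →+* S} {P Q : Type*} [AddCommMonoid P] [Module R P] [AddCommMonoid Q] [Module S Q]
    [Module.Projective R P] (r : P →ₛₗ[σ] Q) (i : Q →+ P) (τ : S → R)
    (hστ : ∀ s, σ (τ s) = s) (hi : ∀ s q, i (s • q) = τ s • i q) (hri : ∀ q, r (i q) = q) :
    Module.Projective S Q := by
  obtain ⟨s, hs⟩ := Module.projective_def'.mp ‹Module.Projective R P›
  let T : (P →₀ R) →+ (Q →₀ S) :=
    (Finsupp.mapDomain.addMonoidHom r).comp (Finsupp.mapRange.addMonoidHom σ.toAddMonoidHom)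
  have hT : ∀ g, Finsupp.linearCombination S id (T g) = r (Finsupp.linearCombination R id g) := by
    intro g
    induction g using Finsupp.induction_linear with
    | zero => simp
    | add g g' hg hg' => simp only [map_add, hg, hg']
    | single p c => simp [T, map_smulₛₗ]
  have hTsmul : ∀ c g, T (τ c • g) = c • T g := by
    intro c g
    have hσ : ∀ x, σ (τ c • x) = c • σ x := fun x => by
      rw [smul_eq_mul, map_mul, hστ, smul_eq_mul]
    simp [T, Finsupp.mapRange_smul' _ _ _ hσ, Finsupp.mapDomain_smul]
  refine Module.projective_def'.mpr
    ⟨{ toFun := fun q => T (s (i q))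
       map_add' := by intros; simp only [map_add]
       map_smul' := by intros; simp only [hi, map_smul, hTsmul, RingHom.id_apply] }, ?_⟩
  ext q
  simpa [hT, hri] using congrArg r (LinearMap.congr_fun hs (i q))

noncomputable def lamDiag {A : Type u} [Ring A] (a : A) : Lam A := TrivSqZeroExt.inl (a, 0)

theorem lamDiag_mul {A : Type u} [Ring A] (a b : A) :
    lamDiag a * lamDiag b = lamDiag (a * b) := by
  have h := TrivSqZeroExt.inl_mul_inl (M := MM A) (a, (0 : BB A)) (b, 0)
  rw [Prod.mk_mul_mk, mul_zero] at h
  exact h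

/-- The right `Λ`-modules `X × Y` whose restriction `- ⊗_Λ Λe` is the `A`-module `X`. -/
class IsTripleModule (A : Type u) [Ring A] (X Y : Type*) [AddCommGroup X] [Module Aᵐᵒᵖ X]
    [AddCommGroup Y] [Module (Lam A)ᵐᵒᵖ (X × Y)] : Prop where
  fst_smul (l : (Lam A)ᵐᵒᵖ) (p : X × Y) : (l • p).1 = op (lamToA A (unop l)) • p.1
  idem_smul (p : X × Y) : op (lamDiag (1 : A)) • p = (p.1, 0)

theorem TripleMap.isTripleModule {A : Type u} [Ring A] {X Y : Type u} [AddCommGroup X]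
    [Module Aᵐᵒᵖ X] [AddCommGroup Y] [Module (BB A)ᵐᵒᵖ Y] (t : TripleMap A X Y) :
    letI := t.module
    IsTripleModule A X Y :=
  letI := t.module
  { fst_smul := fun _ _ => rfl
    idem_smul := fun p => Prod.ext (one_smul _ p.1) <| by
      show op (0 : BB A) • p.2 + t.f p.1 0 = 0
      rw [op_zero, zero_smul, t.f_zero_right, add_zero] }

namespace IsTripleModule

variable {A : Type u} [Ring A]
  {X Y : Type u} [AddCommGroup X] [Module Aᵐᵒᵖ X] [AddCommGroup Y]
  [Module (Lam A)ᵐᵒᵖ (X × Y)] [IsTripleModule A X Y]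
  {X' Y' : Type u} [AddCommGroup X'] [Module Aᵐᵒᵖ X'] [AddCommGroup Y']
  [Module (Lam A)ᵐᵒᵖ (X' × Y')] [IsTripleModule A X' Y']
  {X'' Y'' : Type u} [AddCommGroup X''] [Module Aᵐᵒᵖ X''] [AddCommGroup Y'']
  [Module (Lam A)ᵐᵒᵖ (X'' × Y'')] [IsTripleModule A X'' Y'']

theorem diag_smul_inl (a : A) (x : X) :
    op (lamDiag a) • ((x, 0) : X × Y) = (op a • x, 0) := by
  have hdiag : op (lamDiag a) = op (lamDiag (1 : A)) * op (lamDiag a) := by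
    rw [← op_mul, lamDiag_mul, mul_one]
  rw [hdiag, mul_smul, idem_smul, fst_smul]
  rfl

variable (A X Y) in
noncomputable def fstₛₗ : X × Y →ₛₗ[RingHom.op (lamToA A)] X where
  toFun := Prod.fst
  map_add' _ _ := rfl
  map_smul' := fst_smul

variable (Y Y') in
noncomputable def fstMap (φ : X × Y →ₗ[(Lam A)ᵐᵒᵖ] X' × Y') : X →ₗ[Aᵐᵒᵖ] X' where
  toFun x := (φ (x, 0)).1
  map_add' x x' := by rw [← Prod.fst_add, ← map_add, Prod.mk_add_mk, add_zero]
  map_smul' a x := by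
    rw [RingHom.id_apply, ← op_unop a, ← diag_smul_inl, map_smul, fst_smul]
    rfl

variable {φ : X × Y →ₗ[(Lam A)ᵐᵒᵖ] X' × Y'} {ψ : X' × Y' →ₗ[(Lam A)ᵐᵒᵖ] X'' × Y''}

theorem fstMap_fst (p : X × Y) : fstMap Y Y' φ p.1 = (φ p).1 := by
  calc (φ (p.1, 0)).1 = (φ (op (lamDiag (1 : A)) • p)).1 := by rw [idem_smul]
    _ = (φ p).1 := by rw [map_smul, idem_smul]

theorem map_inl (x : X) : φ (x, 0) = (fstMap Y Y' φ x, 0) := by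
  have := congrArg φ (idem_smul (A := A) ((x, 0) : X × Y))
  rw [map_smul, idem_smul] at this
  exact this.symm

theorem injective_fstMap (hφ : Function.Injective φ) : Function.Injective (fstMap Y Y' φ) :=
  fun x x' h => congrArg Prod.fst <| hφ (show φ (x, 0) = φ (x', 0) by rw [map_inl, map_inl, h])

theorem surjective_fstMap (hφ : Function.Surjective φ) : Function.Surjective (fstMap Y Y' φ) :=
  fun x' => by
    obtain ⟨p, hp⟩ := hφ (x', 0)
    exact ⟨p.1, by rw [fstMap_fst, hp]⟩

theorem exact_fstMap (hφψ : Function.Exact φ ψ) :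
    Function.Exact (fstMap Y Y' φ) (fstMap Y' Y'' ψ) := by
  intro x'
  calc fstMap Y' Y'' ψ x' = 0 ↔ ψ (x', 0) = 0 := by
        rw [map_inl, Prod.mk_eq_zero, and_iff_left rfl]
    _ ↔ (x', 0) ∈ Set.range φ := hφψ _
    _ ↔ x' ∈ Set.range (fstMap Y Y' φ) :=
      ⟨fun ⟨p, hp⟩ => ⟨p.1, by rw [fstMap_fst, hp]⟩, fun ⟨x, hx⟩ => ⟨(x, 0), by rw [map_inl, hx]⟩⟩

variable (Y) in
theorem projective_fst [Module.Projective (Lam A)ᵐᵒᵖ (X × Y)] : Module.Projective Aᵐᵒᵖ X :=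
  .of_semilinear_retract (fstₛₗ A X Y) (.inl X Y) (fun a => op (lamDiag (unop a))) (fun _ => rfl)
    (fun a x => (diag_smul_inl (unop a) x).symm) (fun _ => rfl)

theorem isProjCover_fstMap (hψ : IsProjCover (Lam A)ᵐᵒᵖ ψ) :
    IsProjCover Aᵐᵒᵖ (fstMap Y' Y'' ψ) := by
  obtain ⟨hproj, hsurj, hsmall⟩ := hψ
  refine ⟨projective_fst Y', surjective_fstMap hsurj, fun N hN => ?_⟩
  have hsup : N.comap (fstₛₗ A X' Y') ⊔ LinearMap.ker ψ = ⊤ := by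
    refine eq_top_iff.mpr fun p _ => ?_
    obtain ⟨n, hn, c, hc, hnc⟩ := Submodule.mem_sup.mp (hN ▸ Submodule.mem_top : p.1 ∈ N ⊔ _)
    have hp : p = (n, p.2) + (c, 0) := Prod.ext hnc.symm (add_zero _).symm
    rw [hp]
    refine Submodule.add_mem_sup hn ?_
    rw [LinearMap.mem_ker, map_inl, LinearMap.mem_ker.mp hc, Prod.mk_zero_zero]
  have htop := hsmall _ hsup
  exact eq_top_iff.mpr fun x _ =>
    show (x, (0 : Y')) ∈ N.comap (fstₛₗ A X' Y') from htop ▸ Submodule.mem_top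

end IsTripleModule

open IsTripleModule

theorem stmt_7_general
    (A : Type u) [Ring A]
    (K U X L V Y : Type u)
    [AddCommGroup K] [Module Aᵐᵒᵖ K] [AddCommGroup U] [Module Aᵐᵒᵖ U]
    [AddCommGroup X] [Module Aᵐᵒᵖ X]
    [AddCommGroup L] [Module (BB A)ᵐᵒᵖ L] [AddCommGroup V] [Module (BB A)ᵐᵒᵖ V]
    [AddCommGroup Y] [Module (BB A)ᵐᵒᵖ Y]
    (th : TripleMap A K L) (tg : TripleMap A U V) (tf : TripleMap A X Y) :
    letI := th.module
    letI := tg.module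
    letI := tf.module
    ∀ (φ : (K × L) →ₗ[(Lam A)ᵐᵒᵖ] (U × V)) (ψ : (U × V) →ₗ[(Lam A)ᵐᵒᵖ] (X × Y)),
      Function.Injective φ → Function.Surjective ψ →
      LinearMap.range φ = LinearMap.ker ψ →
      IsProjCover (Lam A)ᵐᵒᵖ ψ →
      ∀ (α : K →ₗ[Aᵐᵒᵖ] U) (γ : U →ₗ[Aᵐᵒᵖ] X),
        (∀ kk : K, (φ (kk, 0)).1 = α kk) → (∀ u : U, (ψ (u, 0)).1 = γ u) →
        Function.Injective α ∧ Function.Surjective γ ∧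
          LinearMap.range α = LinearMap.ker γ ∧ IsProjCover Aᵐᵒᵖ γ ∧
          Nonempty (K ≃ₗ[Aᵐᵒᵖ] LinearMap.ker γ) := by
  let := th.module
  let := tg.module
  let := tf.module
  have := th.isTripleModule
  have := tg.isTripleModule
  have := tf.isTripleModule
  intro φ ψ hφ hψ hrange hcov α γ hα hγ
  obtain rfl : α = fstMap L V φ := LinearMap.ext fun kk => (hα kk).symm
  obtain rfl : γ = fstMap V Y ψ := LinearMap.ext fun u => (hγ u).symm
  have hinj := injective_fstMap hφ
  have hexact : LinearMap.range (fstMap L V φ) = LinearMap.ker (fstMap V Y ψ) :=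
    (LinearMap.exact_iff.mp (exact_fstMap (LinearMap.exact_iff.mpr hrange.symm))).symm
  exact ⟨hinj, surjective_fstMap hψ, hexact, isProjCover_fstMap hcov,
    ⟨(LinearEquiv.ofInjective _ hinj).trans (LinearEquiv.ofEq _ _ hexact)⟩⟩

/-- Let `Λ = (A, M; 0, B)` with `M = A/rad(A)` and `B = T(A/rad(A))`.
If `0 → (K,L,h) → (U,V,g) → (X,Y,f) → 0` is an exact sequence of right `Λ`-modules in
which `(U,V,g) → (X,Y,f)` is a projective cover, then the induced sequence
`0 → K → U → X → 0` of right `A`-modules is exact, `U → X` is a projective cover of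
`X`, and in particular `K ≅ Ω(X)`. -/
theorem stmt_7 (k : Type u) [CommRing k] [IsArtinianRing k]
    (A : Type u) [Ring A] [Algebra k A] [Module.Finite k A]
    (K U X L V Y : Type u)
    [AddCommGroup K] [Module Aᵐᵒᵖ K] [AddCommGroup U] [Module Aᵐᵒᵖ U]
    [AddCommGroup X] [Module Aᵐᵒᵖ X]
    [AddCommGroup L] [Module (BB A)ᵐᵒᵖ L] [AddCommGroup V] [Module (BB A)ᵐᵒᵖ V]
    [AddCommGroup Y] [Module (BB A)ᵐᵒᵖ Y]
    [Module.Finite Aᵐᵒᵖ K] [Module.Finite Aᵐᵒᵖ U] [Module.Finite Aᵐᵒᵖ X]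
    [Module.Finite (BB A)ᵐᵒᵖ L] [Module.Finite (BB A)ᵐᵒᵖ V] [Module.Finite (BB A)ᵐᵒᵖ Y]
    (th : TripleMap A K L) (tg : TripleMap A U V) (tf : TripleMap A X Y) :
    letI := th.module
    letI := tg.module
    letI := tf.module
    ∀ (φ : (K × L) →ₗ[(Lam A)ᵐᵒᵖ] (U × V)) (ψ : (U × V) →ₗ[(Lam A)ᵐᵒᵖ] (X × Y)),
      Function.Injective φ → Function.Surjective ψ →
      LinearMap.range φ = LinearMap.ker ψ →
      IsProjCover (Lam A)ᵐᵒᵖ ψ →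
      ∀ (α : K →ₗ[Aᵐᵒᵖ] U) (γ : U →ₗ[Aᵐᵒᵖ] X),
        (∀ kk : K, (φ (kk, 0)).1 = α kk) → (∀ u : U, (ψ (u, 0)).1 = γ u) →
        Function.Injective α ∧ Function.Surjective γ ∧
          LinearMap.range α = LinearMap.ker γ ∧ IsProjCover Aᵐᵒᵖ γ ∧
          Nonempty (K ≃ₗ[Aᵐᵒᵖ] LinearMap.ker γ) :=
  stmt_7_general A K U X L V Y th tg tf
end

section
/- Let A be an Artin algebra, B = T(A/rad(A)), and Λ = (A, A/rad(A); 0, B) the upper triangular matrix algebra. Then del(A) ≤ del(Λ). -/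
/-!
Let `e = diag(1, 0) ∈ Λ`. The column `Λe` is `(A; 0) ≅ A`, so `Z ↦ Ze` is an exact functor from
right `Λ`-modules to right `A`-modules sending `Λ` to `A`. It therefore preserves projectivity,
finite generation, kernels, direct summands and projective covers (a preimage argument shows
superfluous kernels stay superfluous), so it carries `Λ`-syzygies to `A`-syzygies and a witness
of `del_Λ(X) ≤ d` to one of `del_A(Xe) ≤ d`. A simple `A`-module `S`, inflated along `Λ → A`, is
a simple `Λ`-module with `Se = S`; hence `del_A(S) ≤ del_Λ(S) ≤ del(Λ)`.
-/


open CategoryTheory MulOpposite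

universe u

section Transport

variable {R X X' Y Y' : Type u} [Ring R] [AddCommGroup X] [Module R X]
  [AddCommGroup X'] [Module R X'] [AddCommGroup Y] [Module R Y] [AddCommGroup Y'] [Module R Y']

lemma IsDirectSummandOf.congr (eX : X ≃ₗ[R] X') (eY : Y ≃ₗ[R] Y')
    (h : IsDirectSummandOf R X Y) : IsDirectSummandOf R X' Y' := by
  obtain ⟨i, r, hri⟩ := h
  refine ⟨eY.toLinearMap ∘ₗ i ∘ₗ eX.symm.toLinearMap,
    eX.toLinearMap ∘ₗ r ∘ₗ eY.symm.toLinearMap, LinearMap.ext fun x => ?_⟩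
  simpa using congrArg eX (LinearMap.congr_fun hri (eX.symm x))

lemma IsProjCover.comp_linearEquiv {f : X →ₗ[R] Y} (hf : IsProjCover R f) (e : Y ≃ₗ[R] Y') :
    IsProjCover R (e.toLinearMap ∘ₗ f) := by
  obtain ⟨hP, hsurj, hsup⟩ := hf
  exact ⟨hP, e.surjective.comp hsurj, by rwa [LinearEquiv.ker_comp]⟩

end Transport

section Corner

variable {R S : Type u} [Ring R] [Ring S]

/-- Under these axioms `e = ι 1` is an idempotent with `eR = eRe = ι(S) ≅ S`, and
`Corner ι Z = eZ` below is the exact functor `Hom_R(Re, -)`, which sends `R` to `S`.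
For `R = Λᵐᵒᵖ`, `S = Aᵐᵒᵖ` it is `Z ↦ Ze` on right `Λ`-modules. -/
structure IsCornerSection (π : R →+* S) (ι : S →ₙ+* R) : Prop where
  apply_section : ∀ s, π (ι s) = s
  section_one_mul : ∀ r, ι 1 * r = ι (π r)

variable (ι : S →ₙ+* R) (Z : Type u) [AddCommGroup Z] [Module R Z]

def cornerSubgroup : AddSubgroup Z where
  carrier := {z | ι 1 • z = z}
  add_mem' {a b} ha hb := by simp only [Set.mem_ofPred_eq, smul_add] at *; rw [ha, hb]
  zero_mem' := smul_zero _
  neg_mem' {a} ha := by simp only [Set.mem_ofPred_eq, smul_neg] at *; rw [ha]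

abbrev Corner : Type u := cornerSubgroup ι Z

variable {ι Z}

lemma mem_cornerSubgroup {z : Z} : z ∈ cornerSubgroup ι Z ↔ ι 1 • z = z := Iff.rfl

lemma smul_mem_cornerSubgroup (s : S) (z : Z) : ι s • z ∈ cornerSubgroup ι Z := by
  rw [mem_cornerSubgroup, ← mul_smul, ← map_mul, one_mul]

instance : Module S (Corner ι Z) where
  smul s z := ⟨ι s • z, smul_mem_cornerSubgroup (ι := ι) s (z : Z)⟩
  one_smul z := Subtype.ext z.2
  mul_smul a b z := Subtype.ext (by
    show ι (a * b) • (z : Z) = ι a • ι b • (z : Z)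
    rw [map_mul, mul_smul])
  smul_zero a := Subtype.ext (smul_zero (ι a))
  smul_add a x y := Subtype.ext (smul_add (ι a) (x : Z) y)
  add_smul a b z := Subtype.ext (by
    show ι (a + b) • (z : Z) = ι a • (z : Z) + ι b • (z : Z)
    rw [map_add, add_smul])
  zero_smul z := Subtype.ext (by
    show ι 0 • (z : Z) = 0
    rw [map_zero, zero_smul])

lemma Corner.coe_smul (s : S) (z : Corner ι Z) : ((s • z : Corner ι Z) : Z) = ι s • (z : Z) :=
  rfl

variable {W V : Type u} [AddCommGroup W] [Module R W] [AddCommGroup V] [Module R V]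

def cornerMap (f : Z →ₗ[R] W) : Corner ι Z →ₗ[S] Corner ι W where
  toFun z := ⟨f z, by rw [mem_cornerSubgroup, ← map_smul, z.2]⟩
  map_add' x y := Subtype.ext (map_add f (x : Z) y)
  map_smul' s z := Subtype.ext (map_smul f (ι s) (z : Z))

lemma cornerMap_comp (g : W →ₗ[R] V) (f : Z →ₗ[R] W) :
    cornerMap (ι := ι) (g ∘ₗ f) = cornerMap g ∘ₗ cornerMap f := rfl

lemma cornerMap_id : cornerMap (ι := ι) (LinearMap.id : Z →ₗ[R] Z) = LinearMap.id := rfl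

lemma IsDirectSummandOf.corner (h : IsDirectSummandOf R Z W) :
    IsDirectSummandOf S (Corner ι Z) (Corner ι W) := by
  obtain ⟨i, r, hri⟩ := h
  exact ⟨cornerMap i, cornerMap r, by rw [← cornerMap_comp, hri, cornerMap_id]⟩

def cornerProdEquiv : Corner ι (Z × W) ≃ₗ[S] Corner ι Z × Corner ι W where
  toFun p := (⟨p.1.1, congrArg Prod.fst p.2⟩, ⟨p.1.2, congrArg Prod.snd p.2⟩)
  invFun p := ⟨(p.1.1, p.2.1), Prod.ext p.1.2 p.2.2⟩
  left_inv _ := rfl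
  right_inv _ := rfl
  map_add' _ _ := rfl
  map_smul' _ _ := rfl

def cornerKerEquiv (f : Z →ₗ[R] W) :
    LinearMap.ker (cornerMap (ι := ι) f) ≃ₗ[S] Corner ι (LinearMap.ker f) where
  toFun z := ⟨⟨z.1.1, congrArg Subtype.val z.2⟩, Subtype.ext z.1.2⟩
  invFun w := ⟨⟨w.1.1, congrArg Subtype.val w.2⟩, Subtype.ext w.1.2⟩
  left_inv _ := rfl
  right_inv _ := rfl
  map_add' _ _ := rfl
  map_smul' _ _ := rfl

lemma cornerMap_surjective {f : Z →ₗ[R] W} (hf : Function.Surjective f) :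
    Function.Surjective (cornerMap (ι := ι) f) := by
  rintro ⟨w, hw⟩
  obtain ⟨z, rfl⟩ := hf w
  exact ⟨⟨ι 1 • z, smul_mem_cornerSubgroup 1 z⟩, Subtype.ext ((map_smul f _ z).trans hw)⟩

variable {π : R →+* S}

def cornerProj (h : IsCornerSection π ι) : Z →ₛₗ[π] Corner ι Z where
  toFun z := ⟨ι 1 • z, smul_mem_cornerSubgroup 1 z⟩
  map_add' y z := Subtype.ext (smul_add (ι 1) y z)
  map_smul' r z := Subtype.ext (by
    show ι 1 • r • z = ι (π r) • ι 1 • z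
    rw [← mul_smul, ← mul_smul, h.section_one_mul, ← map_mul, mul_one])

lemma cornerProj_coe (h : IsCornerSection π ι) (z : Corner ι Z) : cornerProj h (z : Z) = z :=
  Subtype.ext z.2

lemma Module.Finite.corner (h : IsCornerSection π ι) [Module.Finite R Z] :
    Module.Finite S (Corner ι Z) :=
  Module.Finite.of_surjective (cornerProj h) fun z => ⟨z, cornerProj_coe h z⟩

noncomputable def cornerFinsuppEquiv (h : IsCornerSection π ι) (X : Type u) :
    Corner ι (X →₀ R) ≃ₗ[S] (X →₀ S) where
  toFun f := Finsupp.mapRange π π.map_zero f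
  invFun g := ⟨Finsupp.mapRange ι ι.map_zero g, Finsupp.ext fun x => by
    simp [smul_eq_mul, h.section_one_mul, h.apply_section]⟩
  left_inv f := Subtype.ext <| Finsupp.ext fun x => by
    simpa [smul_eq_mul, h.section_one_mul] using DFunLike.congr_fun f.2 x
  right_inv g := Finsupp.ext fun x => by simp [h.apply_section]
  map_add' f g := Finsupp.ext fun x => by simp
  map_smul' s f := Finsupp.ext fun x => by
    simp [Corner.coe_smul, smul_eq_mul, h.apply_section]

lemma Module.Projective.corner (h : IsCornerSection π ι) [Module.Projective R Z] :
    Module.Projective S (Corner ι Z) := by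
  obtain ⟨s, hs⟩ := Module.projective_def'.mp ‹Module.Projective R Z›
  have : Module.Projective S (Corner ι (Z →₀ R)) :=
    .of_equiv' (cornerFinsuppEquiv h Z).symm
  exact .of_split (cornerMap s) (cornerMap (Finsupp.linearCombination R id))
    (by rw [← cornerMap_comp, hs, cornerMap_id])

lemma IsProjCover.corner (h : IsCornerSection π ι) {P X : Type u} [AddCommGroup P] [Module R P]
    [AddCommGroup X] [Module R X] {f : P →ₗ[R] X} (hf : IsProjCover R f) :
    IsProjCover S (cornerMap (ι := ι) f) := by
  obtain ⟨hP, hsurj, hsup⟩ := hf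
  refine ⟨.corner h, cornerMap_surjective hsurj, fun N hN => ?_⟩
  -- the preimage of `N` under `z ↦ ez` supplements `ker f`, hence is everything
  have hpre : N.comap (cornerProj h) ⊔ LinearMap.ker f = ⊤ := by
    refine eq_top_iff.mpr fun p _ => ?_
    obtain ⟨n, hn, k, hk, hnk⟩ :=
      Submodule.mem_sup.mp (hN ▸ Submodule.mem_top : cornerProj h p ∈ N ⊔ _)
    have hkf : f k = 0 := congrArg Subtype.val (LinearMap.mem_ker.mp hk)
    have hpk : cornerProj h (p - k) = n := by
      rw [map_sub, ← hnk, cornerProj_coe, add_sub_cancel_right]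
    have hpkN : p - k ∈ N.comap (cornerProj h) := Submodule.mem_comap.mpr (hpk ▸ hn)
    simpa using Submodule.add_mem_sup hpkN (LinearMap.mem_ker.mpr hkf)
  refine eq_top_iff.mpr fun z _ => ?_
  have hz : (z : P) ∈ N.comap (cornerProj h) := hsup _ hpre ▸ Submodule.mem_top
  rwa [Submodule.mem_comap, cornerProj_coe] at hz

lemma IsSyzygy.corner (h : IsCornerSection π ι) {d : ℕ} {Z K : ModuleCat.{u} R}
    (hZK : IsSyzygy R d Z K) (X : ModuleCat.{u} S) (e : X ≃ₗ[S] Corner ι Z) :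
    ∃ K' : ModuleCat.{u} S, IsSyzygy S d X K' ∧ Nonempty (K' ≃ₗ[S] Corner ι K) := by
  induction hZK generalizing X with
  | zero => exact ⟨X, .zero X, ⟨e⟩⟩
  | @succ n Z K P f hf _ ih =>
    let F : ModuleCat.of S (Corner ι P) ⟶ X :=
      ModuleCat.ofHom (e.symm.toLinearMap ∘ₗ cornerMap f.hom)
    have hker : LinearMap.ker F.hom = LinearMap.ker (cornerMap (ι := ι) f.hom) :=
      LinearEquiv.ker_comp _ _
    obtain ⟨K', hK', hK'K⟩ :=
      ih (.of S (LinearMap.ker F.hom)) ((LinearEquiv.ofEq _ _ hker).trans (cornerKerEquiv f.hom))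
    exact ⟨K', .succ F ((hf.corner h).comp_linearEquiv e.symm) hK', hK'K⟩

def restrictScalarsCornerEquiv (h : IsCornerSection π ι) (X : ModuleCat.{u} S) :
    X ≃ₗ[S] Corner ι ((ModuleCat.restrictScalars π).obj X) where
  toFun x := ⟨x, show π (ι 1) • x = x by rw [h.apply_section, one_smul]⟩
  invFun z := z.1
  left_inv _ := rfl
  right_inv _ := rfl
  map_add' _ _ := rfl
  map_smul' s x := Subtype.ext (show s • x = π (ι s) • x by rw [h.apply_section])

lemma isSimpleModule_restrictScalars (h : IsCornerSection π ι) (X : ModuleCat.{u} S)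
    [IsSimpleModule S X] : IsSimpleModule R ((ModuleCat.restrictScalars π).obj X) := by
  have : RingHomSurjective π := ⟨fun s => ⟨ι s, h.apply_section s⟩⟩
  let l : (ModuleCat.restrictScalars π).obj X →ₛₗ[π] X :=
    { toFun := id, map_add' := fun _ _ => rfl, map_smul' := fun _ _ => rfl }
  exact (l.isSimpleModule_iff_of_bijective Function.bijective_id).mpr ‹_›

lemma delLevel_le_delLevel_restrictScalars (h : IsCornerSection π ι) (X : ModuleCat.{u} S) :
    delLevel S X ≤ delLevel R ((ModuleCat.restrictScalars π).obj X) := by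
  refine sInf_le_sInf ?_
  rintro _ ⟨d, rfl, M, P, Ω, T, hM, hP, hPfin, hXΩ, hMT, hΩPT⟩
  obtain ⟨Ω', hXΩ', ⟨eΩ⟩⟩ := hXΩ.corner h X (restrictScalarsCornerEquiv h X)
  obtain ⟨T', hMT', ⟨eT⟩⟩ := hMT.corner h (.of S (Corner ι M)) (LinearEquiv.refl _ _)
  refine ⟨d, rfl, .of S (Corner ι M), .of S (Corner ι P), Ω', T', .corner h, .corner h,
    .corner h, hXΩ', hMT', ?_⟩
  exact hΩPT.corner.congr eΩ.symm
    (cornerProdEquiv.trans ((LinearEquiv.refl _ _).prodCongr eT.symm))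

lemma delAlg_le_delAlg (h : IsCornerSection π ι) : delAlg S ≤ delAlg R :=
  iSup₂_le fun X _ => (delLevel_le_delLevel_restrictScalars h X).trans <|
    le_iSup₂ (f := fun (Y : ModuleCat.{u} R) (_ : IsSimpleModule R Y) => delLevel R Y) _
      (isSimpleModule_restrictScalars h X)

end Corner

section TriangularCorner

variable (A : Type u) [Ring A]

noncomputable def lamProj : Lam A →+* A := (RingHom.fst A (BB A)).comp (lamFst A)

noncomputable def lamIncl : A →ₙ+* Lam A :=
  (TrivSqZeroExt.inlHom (A × BB A) (MM A)).toNonUnitalRingHom.comp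
    ((NonUnitalRingHom.id A).prod 0)

lemma mul_lamIncl_one (x : Lam A) : x * lamIncl A 1 = lamIncl A (lamProj A x) := by
  refine TrivSqZeroExt.ext ?_ ?_
  · show x.fst * (1, 0) = (x.fst.1, 0)
    ext <;> simp
  -- `e` acts on `M` from the right through its `B`-component, which is `0`
  · show x.fst • (0 : MM A) + op ((1, 0) : A × BB A) • x.snd = 0
    rw [smul_zero, zero_add]
    show (show Sq A from x.snd) * bbFst A 0 = 0
    rw [map_zero, mul_zero]

lemma isCornerSection_lam :
    IsCornerSection (RingHom.op (lamProj A)) (NonUnitalRingHom.op (lamIncl A)) where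
  apply_section _ := rfl
  section_one_mul r := congrArg op (mul_lamIncl_one A r.unop)

end TriangularCorner

theorem stmt_10_general (A : Type u) [Ring A] :
    delAlgRight A ≤ delAlgRight (Lam A) :=
  delAlg_le_delAlg (isCornerSection_lam A)

/-- Let `A` be an Artin algebra, `B = T(A/rad(A))`, and
`Λ = (A, A/rad(A); 0, B)` the upper triangular matrix algebra.  Then
`del(A) ≤ del(Λ)`. -/
theorem stmt_10 (k : Type u) [CommRing k] [IsArtinianRing k]
    (A : Type u) [Ring A] [Algebra k A] [Module.Finite k A] :
    delAlgRight A ≤ delAlgRight (Lam A) :=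
  stmt_10_general A
end
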